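/- Let d be a digraphic integer-pair sequence and let C = {u,v,w} be three distinct vertices such that every realization G ∈ R(d) induces a directed 3-cycle on C. Define the map σ : R(d) → R(d) that sends each realization G to the realization σ(G) obtained by reorienting the induced directed 3-cycle on C (reversing its three arcs). Then σ is a well-defined involution on R(d), and σ is an automorphism of the 2-switch meta-graph Ω'_d: realizations G and H differ by a single 2-switch if and only if σ(G) and σ(H) differ by a single 2-switch. Consequently σ is a graph isomorphism between the connected component of Ω'_d containing G and the connected component containing σ(G), and these two components are disjoint. -/

import Mathlib

/-- A simple directed graph on vertex set `V`: an irreflexive (Boolean) arc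
relation, i.e. no self-loops and at most one arc in each direction. -/
structure SDigraph (V : Type) where
  Adj : V → V → Bool
  irrefl : ∀ v, Adj v v = false

/-- Out-degree of a vertex. -/
def SDigraph.outDeg {V : Type} [Fintype V] [DecidableEq V]
    (G : SDigraph V) (v : V) : ℕ :=
  (Finset.univ.filter fun x => G.Adj v x = true).card

/-- In-degree of a vertex. -/
def SDigraph.inDeg {V : Type} [Fintype V] [DecidableEq V]
    (G : SDigraph V) (v : V) : ℕ :=
  (Finset.univ.filter fun x => G.Adj x v = true).card

/-- `G` realizes the integer-pair (degree) sequence `d`: vertex `v` has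
out-degree `(d v).1` and in-degree `(d v).2`. -/
def Realizes {V : Type} [Fintype V] [DecidableEq V]
    (G : SDigraph V) (d : V → ℕ × ℕ) : Prop :=
  ∀ v, G.outDeg v = (d v).1 ∧ G.inDeg v = (d v).2

/-- `H` is obtained from `G` by a single 2-switch: arcs `(v₁,v₂)`, `(v₃,v₄)`
are replaced by `(v₁,v₄)`, `(v₃,v₂)`, allowed only when the four vertices
are distinct, the former two are arcs and the latter two are not. -/
def TwoSwitch {V : Type} [DecidableEq V] (G H : SDigraph V) : Prop :=
  ∃ v₁ v₂ v₃ v₄ : V,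
    v₁ ≠ v₂ ∧ v₁ ≠ v₃ ∧ v₁ ≠ v₄ ∧ v₂ ≠ v₃ ∧ v₂ ≠ v₄ ∧ v₃ ≠ v₄ ∧
    G.Adj v₁ v₂ = true ∧ G.Adj v₃ v₄ = true ∧
    G.Adj v₁ v₄ = false ∧ G.Adj v₃ v₂ = false ∧
    ∀ x y, H.Adj x y =
      if (x = v₁ ∧ y = v₂) ∨ (x = v₃ ∧ y = v₄) then false
      else if (x = v₁ ∧ y = v₄) ∨ (x = v₃ ∧ y = v₂) then true
      else G.Adj x y

/-- `G` and `H` differ by a single 2-switch (in either direction). -/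
def TwoSwitchStep {V : Type} [DecidableEq V] (G H : SDigraph V) : Prop :=
  TwoSwitch G H ∨ TwoSwitch H G

/-- `H` is reachable from `G` by a finite sequence of 2-switches. -/
def Reach2 {V : Type} [DecidableEq V] (G H : SDigraph V) : Prop :=
  Relation.ReflTransGen TwoSwitchStep G H

/-- `H` is obtained from `G` by reorienting an induced directed 3-cycle:
there are distinct `u v w` with arcs `(u,v),(v,w),(w,u)` and no arcs
`(v,u),(w,v),(u,w)`, and `H` replaces these three arcs by the reversed ones. -/
def CycleReorient {V : Type} [DecidableEq V] (G H : SDigraph V) : Prop :=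
  ∃ u v w : V, u ≠ v ∧ v ≠ w ∧ u ≠ w ∧
    G.Adj u v = true ∧ G.Adj v w = true ∧ G.Adj w u = true ∧
    G.Adj v u = false ∧ G.Adj w v = false ∧ G.Adj u w = false ∧
    ∀ x y, H.Adj x y =
      if (x = u ∨ x = v ∨ x = w) ∧ (y = u ∨ y = v ∨ y = w) then G.Adj y x
      else G.Adj x y

/-- The three vertices `u, v, w` induce a directed 3-cycle in `G`: the induced
subgraph on them consists of exactly the three arcs of one cyclic orientation. -/
def InducesC3 {V : Type} (G : SDigraph V) (u v w : V) : Prop :=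
  (G.Adj u v = true ∧ G.Adj v w = true ∧ G.Adj w u = true ∧
    G.Adj v u = false ∧ G.Adj w v = false ∧ G.Adj u w = false) ∨
  (G.Adj v u = true ∧ G.Adj w v = true ∧ G.Adj u w = true ∧
    G.Adj u v = false ∧ G.Adj v w = false ∧ G.Adj w u = false)

/-- The digraph obtained from `G` by reversing all arcs among `{u, v, w}`
(and leaving all other arcs unchanged).  When `{u,v,w}` induces a directed
3-cycle in `G`, this is exactly the reorientation of that 3-cycle. -/
def flip3 {V : Type} [DecidableEq V] (G : SDigraph V) (u v w : V) : SDigraph V where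
  Adj x y :=
    if (x = u ∨ x = v ∨ x = w) ∧ (y = u ∨ y = v ∨ y = w) then G.Adj y x
    else G.Adj x y
  irrefl := by
    intro x
    try simp only []
    rw [ite_self]
    exact G.irrefl x

/-!
Reorienting the 3-cycle on `C` reverses every arc inside `C`; since each vertex of a directed
3-cycle has one in- and one out-arc inside it, degrees are preserved. A 2-switch changes four
arcs, no two of them opposite, while two directed 3-cycles on `C` either coincide or differ on
both `(u, v)` and `(v, u)`. So a 2-switch between realizations fixes every arc inside `C`, hence
commutes with the reorientation, and the orientation of `C` is constant on each component of
`Ω'_d` whereas `σ` changes it.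
-/

open Finset

namespace SDigraph

variable {V : Type}

@[ext]
lemma ext {G H : SDigraph V} (h : ∀ x y, G.Adj x y = H.Adj x y) : G = H := by
  cases G; cases H
  congr
  funext x y
  exact h x y

variable [DecidableEq V]

def reverseOn (G : SDigraph V) (S : Finset V) : SDigraph V where
  Adj x y := if x ∈ S ∧ y ∈ S then G.Adj y x else G.Adj x y
  irrefl x := by simp [G.irrefl]

lemma reverseOn_adj (G : SDigraph V) (S : Finset V) (x y : V) :
    (G.reverseOn S).Adj x y = if x ∈ S ∧ y ∈ S then G.Adj y x else G.Adj x y := rfl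

@[simp]
lemma reverseOn_reverseOn (G : SDigraph V) (S : Finset V) : (G.reverseOn S).reverseOn S = G := by
  ext x y
  by_cases h : x ∈ S ∧ y ∈ S
  · rw [reverseOn_adj, if_pos h, reverseOn_adj, if_pos h.symm]
  · rw [reverseOn_adj, if_neg h, reverseOn_adj, if_neg h]

end SDigraph

variable {V : Type} [DecidableEq V] {G H : SDigraph V}

lemma flip3_eq_reverseOn (G : SDigraph V) (u v w : V) :
    flip3 G u v w = G.reverseOn {u, v, w} := by
  ext x y
  simp [flip3, SDigraph.reverseOn_adj]

lemma adj_of_twoSwitch_formula {v₁ v₂ v₃ v₄ : V} (h₁₃ : v₁ ≠ v₃) (h₂₄ : v₂ ≠ v₄)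
    (hH : ∀ x y, H.Adj x y =
      if (x = v₁ ∧ y = v₂) ∨ (x = v₃ ∧ y = v₄) then false
      else if (x = v₁ ∧ y = v₄) ∨ (x = v₃ ∧ y = v₂) then true
      else G.Adj x y) :
    H.Adj v₁ v₂ = false ∧ H.Adj v₃ v₄ = false ∧ H.Adj v₁ v₄ = true ∧ H.Adj v₃ v₂ = true := by
  simp [hH, h₁₃, h₂₄, h₁₃.symm, h₂₄.symm]

section Degrees

variable [Fintype V]

lemma card_filter_univ_eq_of_card_filter_eq {p q : V → Prop} [DecidablePred p] [DecidablePred q]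
    (S : Finset V) (hoff : ∀ x ∉ S, p x ↔ q x) (hS : #(S.filter p) = #(S.filter q)) :
    #(univ.filter p) = #(univ.filter q) := by
  rw [card_filter, card_filter] at hS ⊢
  rw [← sum_add_sum_compl S, ← sum_add_sum_compl S, hS]
  congr 1
  refine sum_congr rfl fun x hx => ?_
  simp only [hoff x (mem_compl.1 hx)]

lemma SDigraph.outDeg_eq_of_adj_eq_off (A B : Finset V)
    (hoff : ∀ x y, ¬(x ∈ A ∧ y ∈ B) → H.Adj x y = G.Adj x y)
    (hcard : ∀ x ∈ A, #(B.filter (H.Adj x · = true)) = #(B.filter (G.Adj x · = true)))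
    (t : V) : H.outDeg t = G.outDeg t := by
  refine card_filter_univ_eq_of_card_filter_eq B (fun y hy => by rw [hoff t y (by tauto)]) ?_
  by_cases ht : t ∈ A
  · exact hcard t ht
  · exact congrArg card (filter_congr fun y _ => by rw [hoff t y (by tauto)])

lemma SDigraph.inDeg_eq_of_adj_eq_off (A B : Finset V)
    (hoff : ∀ x y, ¬(x ∈ A ∧ y ∈ B) → H.Adj x y = G.Adj x y)
    (hcard : ∀ y ∈ B, #(A.filter (H.Adj · y = true)) = #(A.filter (G.Adj · y = true)))
    (t : V) : H.inDeg t = G.inDeg t := by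
  refine card_filter_univ_eq_of_card_filter_eq A (fun x hx => by rw [hoff x t (by tauto)]) ?_
  by_cases ht : t ∈ B
  · exact hcard t ht
  · exact congrArg card (filter_congr fun x _ => by rw [hoff x t (by tauto)])

lemma realizes_iff_of_degree_eq {d : V → ℕ × ℕ} (hout : ∀ t, H.outDeg t = G.outDeg t)
    (hin : ∀ t, H.inDeg t = G.inDeg t) : Realizes H d ↔ Realizes G d := by
  simp only [Realizes, hout, hin]

lemma realizes_reverseOn_iff {d : V → ℕ × ℕ} {S : Finset V}
    (hbal : ∀ t ∈ S, #(S.filter (G.Adj t · = true)) = #(S.filter (G.Adj · t = true))) :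
    Realizes (G.reverseOn S) d ↔ Realizes G d := by
  have hoff : ∀ x y, ¬(x ∈ S ∧ y ∈ S) → (G.reverseOn S).Adj x y = G.Adj x y :=
    fun x y h => if_neg h
  refine realizes_iff_of_degree_eq (SDigraph.outDeg_eq_of_adj_eq_off S S hoff fun x hx => ?_)
    (SDigraph.inDeg_eq_of_adj_eq_off S S hoff fun y hy => ?_)
  · rw [hbal x hx]
    exact congrArg card (filter_congr fun y hy => by rw [SDigraph.reverseOn_adj, if_pos ⟨hx, hy⟩])
  · rw [← hbal y hy]
    exact congrArg card (filter_congr fun x hx => by rw [SDigraph.reverseOn_adj, if_pos ⟨hx, hy⟩])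

lemma TwoSwitch.realizes_iff {d : V → ℕ × ℕ} (h : TwoSwitch G H) :
    Realizes H d ↔ Realizes G d := by
  obtain ⟨v₁, v₂, v₃, v₄, -, h₁₃, -, -, h₂₄, -, a₁₂, a₃₄, n₁₄, n₃₂, hH⟩ := h
  obtain ⟨b₁₂, b₃₄, b₁₄, b₃₂⟩ := adj_of_twoSwitch_formula h₁₃ h₂₄ hH
  have hoff : ∀ x y, ¬(x ∈ ({v₁, v₃} : Finset V) ∧ y ∈ ({v₂, v₄} : Finset V)) →
      H.Adj x y = G.Adj x y := by
    intro x y hxy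
    simp only [mem_insert, mem_singleton] at hxy
    rw [hH, if_neg (by tauto), if_neg (by tauto)]
  refine realizes_iff_of_degree_eq (SDigraph.outDeg_eq_of_adj_eq_off _ _ hoff ?_)
    (SDigraph.inDeg_eq_of_adj_eq_off _ _ hoff ?_)
  all_goals
    simp only [mem_insert, mem_singleton, forall_eq_or_imp, forall_eq]
    simp [filter_insert, filter_singleton, a₁₂, a₃₄, n₁₄, n₃₂, b₁₂, b₃₄, b₁₄, b₃₂]

lemma TwoSwitchStep.realizes_iff {d : V → ℕ × ℕ} (h : TwoSwitchStep G H) :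
    Realizes H d ↔ Realizes G d := by
  rcases h with h | h
  · exact h.realizes_iff
  · exact h.realizes_iff.symm

lemma Reach2.realizes {d : V → ℕ × ℕ} (hG : Realizes G d) (h : Reach2 G H) :
    Realizes H d := by
  induction h with
  | refl => exact hG
  | tail _ hstep ih => exact hstep.realizes_iff.2 ih

end Degrees

lemma TwoSwitch.adj_eq_or_adj_swap_eq (h : TwoSwitch G H) (x y : V) :
    H.Adj x y = G.Adj x y ∨ H.Adj y x = G.Adj y x := by
  obtain ⟨v₁, v₂, v₃, v₄, h₁₂, h₁₃, h₁₄, h₂₃, h₂₄, h₃₄, -, -, -, -, hH⟩ := h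
  rw [hH, hH]
  by_contra! hne
  obtain ⟨hxy, hyx⟩ := hne
  split_ifs at hxy hyx <;> grind

lemma TwoSwitchStep.adj_eq_or_adj_swap_eq (h : TwoSwitchStep G H) (x y : V) :
    H.Adj x y = G.Adj x y ∨ H.Adj y x = G.Adj y x := by
  rcases h with h | h
  · exact h.adj_eq_or_adj_swap_eq x y
  · simpa only [eq_comm] using h.adj_eq_or_adj_swap_eq x y

lemma TwoSwitch.reverseOn {S : Finset V} (h : TwoSwitch G H)
    (hS : ∀ x ∈ S, ∀ y ∈ S, H.Adj x y = G.Adj x y) :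
    TwoSwitch (G.reverseOn S) (H.reverseOn S) := by
  obtain ⟨v₁, v₂, v₃, v₄, h₁₂, h₁₃, h₁₄, h₂₃, h₂₄, h₃₄, a₁₂, a₃₄, n₁₄, n₃₂, hH⟩ := h
  obtain ⟨b₁₂, b₃₄, b₁₄, b₃₂⟩ := adj_of_twoSwitch_formula h₁₃ h₂₄ hH
  have hchanged : ∀ x y, H.Adj x y ≠ G.Adj x y → ¬(x ∈ S ∧ y ∈ S) :=
    fun x y hne hxy => hne (hS x hxy.1 y hxy.2)
  have s₁₂ := hchanged v₁ v₂ (by simp [a₁₂, b₁₂])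
  have s₃₄ := hchanged v₃ v₄ (by simp [a₃₄, b₃₄])
  have s₁₄ := hchanged v₁ v₄ (by simp [n₁₄, b₁₄])
  have s₃₂ := hchanged v₃ v₂ (by simp [n₃₂, b₃₂])
  refine ⟨v₁, v₂, v₃, v₄, h₁₂, h₁₃, h₁₄, h₂₃, h₂₄, h₃₄, ?_, ?_, ?_, ?_, fun x y => ?_⟩
  · rwa [SDigraph.reverseOn_adj, if_neg s₁₂]
  · rwa [SDigraph.reverseOn_adj, if_neg s₃₄]
  · rwa [SDigraph.reverseOn_adj, if_neg s₁₄]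
  · rwa [SDigraph.reverseOn_adj, if_neg s₃₂]
  rw [SDigraph.reverseOn_adj, SDigraph.reverseOn_adj]
  by_cases hxy : x ∈ S ∧ y ∈ S
  · rw [if_pos hxy, if_pos hxy, hS y hxy.2 x hxy.1, if_neg, if_neg]
    · rintro (⟨rfl, rfl⟩ | ⟨rfl, rfl⟩) <;> contradiction
    · rintro (⟨rfl, rfl⟩ | ⟨rfl, rfl⟩) <;> contradiction
  · rw [if_neg hxy, if_neg hxy, hH]

lemma TwoSwitchStep.reverseOn {S : Finset V} (h : TwoSwitchStep G H)
    (hS : ∀ x ∈ S, ∀ y ∈ S, H.Adj x y = G.Adj x y) :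
    TwoSwitchStep (G.reverseOn S) (H.reverseOn S) := by
  rcases h with h | h
  · exact Or.inl (h.reverseOn hS)
  · exact Or.inr (h.reverseOn fun x hx y hy => (hS x hx y hy).symm)

section Triangle

variable {u v w : V}

lemma InducesC3.card_filter_adj_eq (h : InducesC3 G u v w) :
    ∀ t ∈ ({u, v, w} : Finset V),
      #(({u, v, w} : Finset V).filter (G.Adj t · = true)) =
        #(({u, v, w} : Finset V).filter (G.Adj · t = true)) := by
  simp only [mem_insert, mem_singleton, forall_eq_or_imp, forall_eq]
  rcases h with ⟨a₁, a₂, a₃, a₄, a₅, a₆⟩ | ⟨a₁, a₂, a₃, a₄, a₅, a₆⟩ <;>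
    simp [filter_insert, filter_singleton, G.irrefl, a₁, a₂, a₃, a₄, a₅, a₆]

/-- Two directed 3-cycles on the same triple have either the same or opposite orientation, and
the opposite orientation changes both `(u, v)` and `(v, u)`. -/
lemma InducesC3.adj_eq_of_adj_eq_or_adj_swap_eq (hG : InducesC3 G u v w)
    (hH : InducesC3 H u v w) (huv : H.Adj u v = G.Adj u v ∨ H.Adj v u = G.Adj v u) :
    ∀ x ∈ ({u, v, w} : Finset V), ∀ y ∈ ({u, v, w} : Finset V), H.Adj x y = G.Adj x y := by
  simp only [mem_insert, mem_singleton, forall_eq_or_imp, forall_eq]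
  rcases hG with ⟨g₁, g₂, g₃, g₄, g₅, g₆⟩ | ⟨g₁, g₂, g₃, g₄, g₅, g₆⟩ <;>
    rcases hH with ⟨h₁, h₂, h₃, h₄, h₅, h₆⟩ | ⟨h₁, h₂, h₃, h₄, h₅, h₆⟩ <;>
    simp_all [G.irrefl, H.irrefl]

lemma InducesC3.reverseOn_adj_ne (h : InducesC3 G u v w) :
    (G.reverseOn {u, v, w}).Adj u v ≠ G.Adj u v := by
  rw [SDigraph.reverseOn_adj, if_pos (by simp)]
  rcases h with ⟨h₁, -, -, h₄, -, -⟩ | ⟨h₁, -, -, h₄, -, -⟩ <;> simp [h₁, h₄]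

end Triangle

section Realizations

variable [Fintype V] {d : V → ℕ × ℕ} {u v w : V}
  (hC3 : ∀ G : SDigraph V, Realizes G d → InducesC3 G u v w)
include hC3

lemma TwoSwitchStep.adj_eq_on_of_inducesC3 (hG : Realizes G d) (h : TwoSwitchStep G H) :
    ∀ x ∈ ({u, v, w} : Finset V), ∀ y ∈ ({u, v, w} : Finset V), H.Adj x y = G.Adj x y :=
  (hC3 G hG).adj_eq_of_adj_eq_or_adj_swap_eq (hC3 H (h.realizes_iff.2 hG))
    (h.adj_eq_or_adj_swap_eq u v)

lemma Reach2.adj_eq_on_of_inducesC3 (hG : Realizes G d) (h : Reach2 G H) :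
    ∀ x ∈ ({u, v, w} : Finset V), ∀ y ∈ ({u, v, w} : Finset V), H.Adj x y = G.Adj x y := by
  induction h with
  | refl => exact fun _ _ _ _ => rfl
  | tail hGK hKL ih =>
    intro x hx y hy
    rw [hKL.adj_eq_on_of_inducesC3 hC3 (Reach2.realizes hG hGK) x hx y hy, ih x hx y hy]

lemma TwoSwitch.flip3 (hG : Realizes G d) (h : TwoSwitch G H) :
    TwoSwitch (flip3 G u v w) (flip3 H u v w) := by
  rw [flip3_eq_reverseOn, flip3_eq_reverseOn]
  exact h.reverseOn (TwoSwitchStep.adj_eq_on_of_inducesC3 hC3 hG (Or.inl h))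

lemma Reach2.flip3 (hG : Realizes G d) (h : Reach2 G H) :
    Reach2 (flip3 G u v w) (flip3 H u v w) := by
  induction h with
  | refl => exact .refl
  | tail hGK hKL ih =>
    refine ih.tail ?_
    rw [flip3_eq_reverseOn, flip3_eq_reverseOn]
    exact hKL.reverseOn (hKL.adj_eq_on_of_inducesC3 hC3 (Reach2.realizes hG hGK))

end Realizations

theorem statement12_general {V : Type} [Fintype V] [DecidableEq V] (d : V → ℕ × ℕ)
    (u v w : V)
    (hanchor : ∀ G : SDigraph V, Realizes G d → InducesC3 G u v w) :
    (∀ G : SDigraph V, Realizes G d → Realizes (flip3 G u v w) d) ∧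
    (∀ G : SDigraph V, Realizes G d → flip3 (flip3 G u v w) u v w = G) ∧
    (∀ G H : SDigraph V, Realizes G d → Realizes H d →
      (TwoSwitch G H ↔ TwoSwitch (flip3 G u v w) (flip3 H u v w))) ∧
    (∀ G H : SDigraph V, Realizes G d → Realizes H d →
      (Reach2 G H ↔ Reach2 (flip3 G u v w) (flip3 H u v w))) ∧
    (∀ G : SDigraph V, Realizes G d → ¬ Reach2 G (flip3 G u v w)) := by
  have hflip (G : SDigraph V) (hG : Realizes G d) : Realizes (flip3 G u v w) d := by
    rw [flip3_eq_reverseOn]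
    exact (realizes_reverseOn_iff (hanchor G hG).card_filter_adj_eq).2 hG
  have hinv (G : SDigraph V) : flip3 (flip3 G u v w) u v w = G := by
    simp only [flip3_eq_reverseOn, SDigraph.reverseOn_reverseOn]
  refine ⟨hflip, fun G _ => hinv G, fun G H hG _ => ⟨?_, ?_⟩, fun G H hG _ => ⟨?_, ?_⟩, ?_⟩
  · exact TwoSwitch.flip3 hanchor hG
  · simpa only [hinv] using TwoSwitch.flip3 hanchor (hflip G hG) (H := flip3 H u v w)
  · exact Reach2.flip3 hanchor hG
  · simpa only [hinv] using Reach2.flip3 hanchor (hflip G hG) (H := flip3 H u v w)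
  · intro G hG hreach
    have huv := hreach.adj_eq_on_of_inducesC3 hanchor hG u (by simp) v (by simp)
    rw [flip3_eq_reverseOn] at huv
    exact (hanchor G hG).reverseOn_adj_ne huv

/-- let `d` be a digraphic sequence such that every
realization induces a directed 3-cycle on the distinct vertices `u, v, w`,
and let `σ = flip3 · u v w` be the reorientation of that 3-cycle.  Then `σ`
maps `R(d)` to `R(d)` and is an involution; realizations `G, H` differ by a
single 2-switch iff `σ G, σ H` do (so `σ` is an automorphism of `Ω'_d`);
consequently `σ` is an isomorphism between the 2-switch connected component
of `G` and that of `σ G`, and these components are disjoint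
(`G` never 2-switch-reaches `σ G`). -/
theorem statement12 {V : Type} [Fintype V] [DecidableEq V] (d : V → ℕ × ℕ)
    (u v w : V) (huv : u ≠ v) (hvw : v ≠ w) (huw : u ≠ w)
    (hd : ∃ G : SDigraph V, Realizes G d)
    (hanchor : ∀ G : SDigraph V, Realizes G d → InducesC3 G u v w) :
    (∀ G : SDigraph V, Realizes G d → Realizes (flip3 G u v w) d) ∧
    (∀ G : SDigraph V, Realizes G d → flip3 (flip3 G u v w) u v w = G) ∧
    (∀ G H : SDigraph V, Realizes G d → Realizes H d →
      (TwoSwitch G H ↔ TwoSwitch (flip3 G u v w) (flip3 H u v w))) ∧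
    (∀ G H : SDigraph V, Realizes G d → Realizes H d →
      (Reach2 G H ↔ Reach2 (flip3 G u v w) (flip3 H u v w))) ∧
    (∀ G : SDigraph V, Realizes G d → ¬ Reach2 G (flip3 G u v w)) :=
  statement12_general d u v w hanchor
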